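/- arXiv:2603.15331 — 7 statements merged into one kernel-verified Lean document; each statement's English description precedes it below -/
import Mathlib

section
/- Let n ≥ 1, let D > 0 and ρ > 0 be real constants, let 𝐧 ∈ ℝⁿ be a unit vector, and set c = 5·√(ρD/6). Then the function u : ℝⁿ × ℝ → ℝ defined by u(x,t) = (1 + exp(√(ρ/(6D))·(⟨𝐧,x⟩ − ct)))⁻² satisfies Fisher's equation ∂ₜu(x,t) = D·Δₓu(x,t) + ρ·u(x,t)·(1 − u(x,t)) at every point (x,t) ∈ ℝⁿ × ℝ. -/
open Real

/-- Time partial derivative of `u : ℝⁿ × ℝ → ℝ` at `(x, t)`. -/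
noncomputable def timeDeriv {n : ℕ} (u : EuclideanSpace ℝ (Fin n) × ℝ → ℝ)
    (x : EuclideanSpace ℝ (Fin n)) (t : ℝ) : ℝ :=
  deriv (fun s => u (x, s)) t

/-- Spatial Laplacian of `u : ℝⁿ × ℝ → ℝ` at `(x, t)`: the sum of the second
directional derivatives along the standard orthonormal basis vectors. -/
noncomputable def spaceLaplacian {n : ℕ} (u : EuclideanSpace ℝ (Fin n) × ℝ → ℝ)
    (x : EuclideanSpace ℝ (Fin n)) (t : ℝ) : ℝ :=
  ∑ i : Fin n, iteratedDeriv 2 (fun s : ℝ => u (x + s • EuclideanSpace.single i 1, t)) 0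

noncomputable def g (z : ℝ) : ℝ := (1 + Real.exp z)⁻¹ ^ 2
noncomputable def g1 (z : ℝ) : ℝ := -2 * Real.exp z * ((1 + Real.exp z)⁻¹) ^ 3
noncomputable def g2 (z : ℝ) : ℝ :=
  6 * Real.exp z ^ 2 * ((1 + Real.exp z)⁻¹) ^ 4 - 2 * Real.exp z * ((1 + Real.exp z)⁻¹) ^ 3

lemma hA (z : ℝ) : (1 + Real.exp z) ≠ 0 := by positivity

lemma hasDerivAt_g (z : ℝ) : HasDerivAt g (g1 z) z := by
  have h1 : HasDerivAt (fun z => 1 + Real.exp z) (Real.exp z) z := by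
    simpa using (Real.hasDerivAt_exp z).const_add 1
  have h2 := h1.inv (hA z)
  have h3 := h2.pow 2
  refine h3.congr_deriv ?_
  have := hA z
  simp only [g1, Pi.pow_apply, Pi.inv_apply, Nat.cast_ofNat, Nat.reduceSub]
  field_simp

lemma hasDerivAt_g1 (z : ℝ) : HasDerivAt g1 (g2 z) z := by
  have h1 : HasDerivAt (fun z => 1 + Real.exp z) (Real.exp z) z := by
    simpa using (Real.hasDerivAt_exp z).const_add 1
  have h2 := h1.inv (hA z)
  have h3 := h2.pow 3
  have h4 := ((Real.hasDerivAt_exp z).mul h3).const_mul (-2 : ℝ)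
  have heq : g1 = fun z => (-2:ℝ) * (Real.exp z * ((1 + Real.exp z)⁻¹)^3) := by
    funext w; simp [g1]; ring
  rw [heq]
  refine h4.congr_deriv ?_
  have := hA z
  simp only [g2, Pi.pow_apply, Pi.inv_apply, Nat.cast_ofNat, Nat.reduceSub]
  field_simp
  ring

lemma deriv_affine_comp_g (a m : ℝ) :
    deriv (fun s : ℝ => g (a + m * s)) = fun s => m * g1 (a + m * s) := by
  funext s
  have hlin : HasDerivAt (fun s : ℝ => a + m * s) m s := by
    simpa using ((hasDerivAt_id s).const_mul m).const_add a
  have := (hasDerivAt_g (a + m * s)).comp s hlin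
  simpa [Function.comp_def, mul_comm] using this.deriv

lemma second_deriv_affine_comp_g (a m : ℝ) :
    iteratedDeriv 2 (fun s : ℝ => g (a + m * s)) 0 = m ^ 2 * g2 a := by
  rw [iteratedDeriv_succ, iteratedDeriv_one, deriv_affine_comp_g]
  have hlin : HasDerivAt (fun s : ℝ => a + m * s) m 0 := by
    simpa using ((hasDerivAt_id (0:ℝ)).const_mul m).const_add a
  have := (((hasDerivAt_g1 (a + m * 0)).comp 0 hlin).const_mul m).deriv
  simp only [mul_zero, add_zero] at this
  rw [show (fun s : ℝ => m * g1 (a + m * s)) = fun s => m * ((g1 ∘ fun s => a + m * s) s) from rfl]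
  rw [this]; ring

set_option maxHeartbeats 1000000 in
theorem fisher_exact_traveling_wave
    {n : ℕ} (hn : 1 ≤ n) (D ρ : ℝ) (hD : 0 < D) (hρ : 0 < ρ)
    (nvec : EuclideanSpace ℝ (Fin n)) (hnvec : ‖nvec‖ = 1)
    (c : ℝ) (hc : c = 5 * Real.sqrt (ρ * D / 6))
    (u : EuclideanSpace ℝ (Fin n) × ℝ → ℝ)
    (hu : ∀ x t, u (x, t) =
      (1 + Real.exp (Real.sqrt (ρ / (6 * D)) * ((inner ℝ nvec x : ℝ) - c * t)))⁻¹ ^ 2) :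
    ∀ x t, timeDeriv u x t =
      D * spaceLaplacian u x t + ρ * u (x, t) * (1 - u (x, t)) := by
  intro x t
  obtain ⟨k, hk⟩ : ∃ k : ℝ, k = Real.sqrt (ρ / (6 * D)) := ⟨_, rfl⟩
  simp only [← hk] at hu
  have hk0 : 0 ≤ k := hk ▸ Real.sqrt_nonneg _
  have hk2 : k ^ 2 = ρ / (6 * D) := by rw [hk]; exact Real.sq_sqrt (by positivity)
  have hkc : k * c = 5 * (ρ / 6) := by
    rw [hc, show k * (5 * Real.sqrt (ρ * D / 6)) = 5 * (k * Real.sqrt (ρ * D / 6)) from by ring,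
      hk, ← Real.sqrt_mul (by positivity),
      show ρ / (6 * D) * (ρ * D / 6) = (ρ / 6) ^ 2 from by field_simp,
      Real.sqrt_sq (by positivity)]
  obtain ⟨z, hz⟩ : ∃ z : ℝ, z = k * ((inner ℝ nvec x : ℝ) - c * t) := ⟨_, rfl⟩
  -- sum of squares of components is 1
  have hsum : ∑ i : Fin n, (nvec i) ^ 2 = 1 := by
    have h1 : ‖nvec‖ = Real.sqrt (∑ i, ‖nvec i‖ ^ 2) := EuclideanSpace.norm_eq nvec
    have h2 : ∑ i, ‖nvec i‖ ^ 2 = ∑ i : Fin n, (nvec i) ^ 2 := by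
      simp [Real.norm_eq_abs, sq_abs]
    have h4 : Real.sqrt (∑ i : Fin n, (nvec i) ^ 2) = 1 := by
      rw [← h2, ← h1, hnvec]
    rwa [Real.sqrt_eq_one] at h4
  -- time derivative
  have ht : timeDeriv u x t = -(k * c) * g1 z := by
    unfold timeDeriv
    have hfun : (fun s => u (x, s)) = fun s => g (k * (inner ℝ nvec x : ℝ) + (-(k * c)) * s) := by
      funext s
      rw [hu x s, g,
        show k * ((inner ℝ nvec x : ℝ) - c * s) = k * (inner ℝ nvec x : ℝ) + (-(k * c)) * s
          from by ring]
    rw [hfun, deriv_affine_comp_g]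
    beta_reduce
    rw [hz, show k * (inner ℝ nvec x : ℝ) + (-(k * c)) * t = k * ((inner ℝ nvec x : ℝ) - c * t)
      from by ring]
  -- space Laplacian
  have hs : spaceLaplacian u x t = k ^ 2 * g2 z := by
    unfold spaceLaplacian
    have hterm : ∀ i : Fin n,
        iteratedDeriv 2 (fun s : ℝ => u (x + s • EuclideanSpace.single i 1, t)) 0
          = (k * nvec i) ^ 2 * g2 z := by
      intro i
      have hin : ∀ s : ℝ,
          (inner ℝ nvec (x + s • EuclideanSpace.single i (1:ℝ)) : ℝ)
            = (inner ℝ nvec x : ℝ) + s * nvec i := by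
        intro s
        rw [inner_add_right, real_inner_smul_right]
        have : (inner ℝ nvec (EuclideanSpace.single i (1:ℝ)) : ℝ) = nvec i := by
          simpa using EuclideanSpace.inner_single_right (𝕜 := ℝ) i 1 nvec
        rw [this]
      have hfun : (fun s : ℝ => u (x + s • EuclideanSpace.single i 1, t))
          = fun s => g (z + (k * nvec i) * s) := by
        funext s
        rw [hu, hin, g, hz,
          show k * ((inner ℝ nvec x : ℝ) + s * nvec i - c * t)
              = k * ((inner ℝ nvec x : ℝ) - c * t) + (k * nvec i) * s from by ring]
      rw [hfun, second_deriv_affine_comp_g]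
    rw [Finset.sum_congr rfl fun i _ => hterm i]
    rw [← Finset.sum_mul]
    have : ∑ i : Fin n, (k * nvec i) ^ 2 = k ^ 2 := by
      simp only [mul_pow, ← Finset.mul_sum, hsum, mul_one]
    rw [this]
  have huz : u (x, t) = g z := by rw [hu, g, ← hz]
  rw [ht, hs, huz, hkc, g, g1, g2, hk2]
  have hAz := hA z
  field_simp
  ring
end

section
/- Let n ≥ 1, let D > 0, ρ > 0 and q > 0 be real constants, let 𝐧 ∈ ℝⁿ be a unit vector, and set c = (q+4)/√(2q+4) · √(ρD). Then the function u : ℝⁿ × ℝ → ℝ defined by u(x,t) = (1/2 + (1/2)·tanh(−(q/(2√(2q+4)))·√(ρ/D)·(⟨𝐧,x⟩ − ct)))^(2/q) satisfies the Newell–Whitehead–Segel equation ∂ₜu(x,t) = D·Δₓu(x,t) + ρ·u(x,t)·(1 − u(x,t)^q) at every point (x,t) ∈ ℝⁿ × ℝ. -/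
open Real

namespace NWS

lemma tanh_hasDerivAt (y : ℝ) : HasDerivAt Real.tanh (1 - Real.tanh y ^ 2) y := by
  have h := (Real.hasDerivAt_sinh y).div (Real.hasDerivAt_cosh y) (Real.cosh_pos y).ne'
  have hfun : (fun x => Real.sinh x / Real.cosh x) = Real.tanh :=
    funext fun x => (Real.tanh_eq_sinh_div_cosh x).symm
  rw [show (Real.sinh / Real.cosh) = Real.tanh from hfun] at h
  refine h.congr_deriv ?_
  have hc := (Real.cosh_pos y).ne'
  rw [Real.tanh_eq_sinh_div_cosh]
  have h1 := Real.cosh_sq_sub_sinh_sq y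
  field_simp

lemma tanh_lt_one (y : ℝ) : Real.tanh y < 1 := by
  rw [Real.tanh_eq_sinh_div_cosh, div_lt_one (Real.cosh_pos y)]
  nlinarith [Real.cosh_sub_sinh y, Real.exp_pos (-y)]

lemma neg_one_lt_tanh (y : ℝ) : -1 < Real.tanh y := by
  rw [Real.tanh_eq_sinh_div_cosh, lt_div_iff₀ (Real.cosh_pos y)]
  nlinarith [Real.cosh_add_sinh y, Real.exp_pos y]

noncomputable def H (k s : ℝ) : ℝ := 1/2 + 1/2 * Real.tanh (k * s)

lemma H_pos (k s : ℝ) : 0 < H k s := by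
  have := neg_one_lt_tanh (k * s); unfold H; linarith

lemma H_lt_one (k s : ℝ) : H k s < 1 := by
  have := tanh_lt_one (k * s); unfold H; linarith

lemma H_hasDerivAt (k s : ℝ) :
    HasDerivAt (H k) (2 * k * H k s * (1 - H k s)) s := by
  have h1 : HasDerivAt (fun s : ℝ => k * s) k s := by
    simpa using (hasDerivAt_id s).const_mul k
  have h2 := ((tanh_hasDerivAt (k * s)).comp s h1).const_mul (1/2 : ℝ)
  have h3 := h2.const_add (1/2 : ℝ)
  refine h3.congr_deriv ?_
  unfold H; ring

lemma G_hasDerivAt (k q : ℝ) (hq : 0 < q) (s : ℝ) :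
    HasDerivAt (fun s => H k s ^ (2/q))
      (4 * k / q * H k s ^ (2/q) * (1 - H k s)) s := by
  have h1 := (Real.hasDerivAt_rpow_const (p := 2/q) (Or.inl (H_pos k s).ne')).comp s
    (H_hasDerivAt k s)
  refine h1.congr_deriv ?_
  have key : H k s ^ (2/q - 1 + 1) = H k s ^ (2/q - 1) * H k s :=
    Real.rpow_add_one (H_pos k s).ne' _
  rw [show (2/q - 1 + 1 : ℝ) = 2/q by ring] at key
  rw [key]
  field_simp
  ring

lemma G'_hasDerivAt (k q : ℝ) (hq : 0 < q) (s : ℝ) :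
    HasDerivAt (fun s => 4 * k / q * H k s ^ (2/q) * (1 - H k s))
      (8 * k^2 / q * H k s ^ (2/q) * (1 - H k s) *
        (2/q * (1 - H k s) - H k s)) s := by
  have hf := (G_hasDerivAt k q hq s).const_mul (4 * k / q)
  have hg := (H_hasDerivAt k s).const_sub (1 : ℝ)
  have h := hf.mul hg
  refine h.congr_deriv ?_
  field_simp
  ring

lemma ode (D ρ q k c h : ℝ) (hq : 0 < q) (hh0 : 0 < h)
    (hk2 : ρ * q ^ 2 = k ^ 2 * (8 * D * (q + 2)))
    (hck : c * q = -(2 * D * k * (q + 4))) :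
    4 * k / q * h ^ (2/q) * (1 - h) * (-c) =
      D * (8 * k^2 / q * h ^ (2/q) * (1 - h) * (2/q * (1 - h) - h)) +
      ρ * h ^ (2/q) * (1 - (h ^ (2/q)) ^ q) := by
  have h2 : (h ^ (2/q)) ^ q = h ^ 2 := by
    rw [← Real.rpow_mul hh0.le, div_mul_cancel₀ (2:ℝ) hq.ne', Real.rpow_two]
  have hcv : c = -(2 * D * k * (q + 4)) / q := by
    rw [eq_div_iff hq.ne']; exact hck
  have hρv : ρ = k ^ 2 * (8 * D * (q + 2)) / q ^ 2 := by
    rw [eq_div_iff (pow_ne_zero 2 hq.ne')]; exact hk2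
  rw [h2, hcv, hρv]
  field_simp
  ring

end NWS

theorem nws_exact_traveling_wave
    {n : ℕ} (hn : 1 ≤ n) (D ρ q : ℝ) (hD : 0 < D) (hρ : 0 < ρ) (hq : 0 < q)
    (nvec : EuclideanSpace ℝ (Fin n)) (hnvec : ‖nvec‖ = 1)
    (c : ℝ) (hc : c = (q + 4) / Real.sqrt (2 * q + 4) * Real.sqrt (ρ * D))
    (u : EuclideanSpace ℝ (Fin n) × ℝ → ℝ)
    (hu : ∀ x t, u (x, t) =
      (1 / 2 + 1 / 2 * Real.tanh (-(q / (2 * Real.sqrt (2 * q + 4))) *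
        Real.sqrt (ρ / D) * ((inner ℝ nvec x : ℝ) - c * t))) ^ (2 / q)) :
    ∀ x t, timeDeriv u x t =
      D * spaceLaplacian u x t + ρ * u (x, t) * (1 - u (x, t) ^ q) := by
  intro x t
  set k : ℝ := -(q / (2 * Real.sqrt (2 * q + 4))) * Real.sqrt (ρ / D) with hk
  set ξ : ℝ := (inner ℝ nvec x : ℝ) - c * t with hξ
  -- square-root identities
  have hS2 : Real.sqrt (2 * q + 4) ^ 2 = 2 * q + 4 := Real.sq_sqrt (by linarith)
  have hT2 : Real.sqrt (ρ / D) ^ 2 = ρ / D := Real.sq_sqrt (by positivity)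
  have hDT : D * Real.sqrt (ρ / D) = Real.sqrt (ρ * D) := by
    rw [show ρ * D = D ^ 2 * (ρ / D) by field_simp, Real.sqrt_mul (sq_nonneg D),
      Real.sqrt_sq hD.le]
  have hk2 : ρ * q ^ 2 = k ^ 2 * (8 * D * (q + 2)) := by
    have e : k ^ 2 * (8 * D * (q + 2)) =
        q ^ 2 / (4 * Real.sqrt (2 * q + 4) ^ 2) * Real.sqrt (ρ / D) ^ 2 * (8 * D * (q + 2)) := by
      rw [hk]; ring
    rw [e, hS2, hT2]
    field_simp
    ring
  have hck : c * q = -(2 * D * k * (q + 4)) := by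
    rw [hc, hk, ← hDT]
    field_simp
  -- time derivative
  have hfun_t : (fun s => u (x, s)) = fun s => NWS.H k ((inner ℝ nvec x : ℝ) - c * s) ^ (2/q) := by
    funext s
    rw [hu x s]
    simp only [NWS.H, hk]
  have hd1 : HasDerivAt (fun s : ℝ => (inner ℝ nvec x : ℝ) - c * s) (-c) t := by
    simpa using ((hasDerivAt_id t).const_mul c).const_sub ((inner ℝ nvec x : ℝ))
  have hT : HasDerivAt (fun s : ℝ => NWS.H k ((inner ℝ nvec x : ℝ) - c * s) ^ (2/q))
      (4 * k / q * NWS.H k ξ ^ (2/q) * (1 - NWS.H k ξ) * (-c)) t :=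
    ((NWS.G_hasDerivAt k q hq ξ).comp t hd1 :)
  have htime : timeDeriv u x t = 4 * k / q * NWS.H k ξ ^ (2/q) * (1 - NWS.H k ξ) * (-c) := by
    rw [timeDeriv, hfun_t]
    exact hT.deriv
  -- Laplacian
  set Gv : ℝ := 8 * k^2 / q * NWS.H k ξ ^ (2/q) * (1 - NWS.H k ξ) *
    (2/q * (1 - NWS.H k ξ) - NWS.H k ξ) with hGv
  have hLap : ∀ i : Fin n,
      iteratedDeriv 2 (fun s : ℝ => u (x + s • EuclideanSpace.single i 1, t)) 0
        = nvec i ^ 2 * Gv := by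
    intro i
    set m : ℝ := nvec i with hm
    have hip : ∀ s : ℝ, (inner ℝ nvec (x + s • EuclideanSpace.single i 1) : ℝ)
        = (inner ℝ nvec x : ℝ) + s * m := by
      intro s
      rw [inner_add_right, real_inner_smul_right, EuclideanSpace.inner_single_right]
      simp [hm]
    have hfun : (fun s : ℝ => u (x + s • EuclideanSpace.single i 1, t))
        = fun s => NWS.H k (ξ + s * m) ^ (2/q) := by
      funext s
      rw [hu, hip s, show (inner ℝ nvec x : ℝ) + s * m - c * t = ξ + s * m by rw [hξ]; ring]
      simp only [NWS.H, hk]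
    have haff : ∀ s₀ : ℝ, HasDerivAt (fun s : ℝ => ξ + s * m) m s₀ := fun s₀ => by
      simpa using ((hasDerivAt_id s₀).mul_const m).const_add ξ
    have hderiv : deriv (fun s : ℝ => NWS.H k (ξ + s * m) ^ (2/q))
        = fun s₀ => 4 * k / q * NWS.H k (ξ + s₀ * m) ^ (2/q) * (1 - NWS.H k (ξ + s₀ * m)) * m :=
      funext fun s₀ => (((NWS.G_hasDerivAt k q hq (ξ + s₀ * m)).comp s₀ (haff s₀)).deriv :)
    have h2nd : HasDerivAt
        (fun s₀ : ℝ => 4 * k / q * NWS.H k (ξ + s₀ * m) ^ (2/q) * (1 - NWS.H k (ξ + s₀ * m)) * m)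
        (8 * k^2 / q * NWS.H k (ξ + 0 * m) ^ (2/q) * (1 - NWS.H k (ξ + 0 * m)) *
          (2/q * (1 - NWS.H k (ξ + 0 * m)) - NWS.H k (ξ + 0 * m)) * m * m) 0 :=
      ((((NWS.G'_hasDerivAt k q hq (ξ + 0 * m)).comp 0 (haff 0)).mul_const m) :)
    rw [hfun, iteratedDeriv_succ, iteratedDeriv_one, hderiv]
    rw [h2nd.deriv]
    simp only [zero_mul, add_zero, hGv]
    ring
  have hsum : ∑ i : Fin n, nvec i ^ 2 = 1 := by
    have h := EuclideanSpace.norm_eq nvec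
    rw [hnvec] at h
    have h2 : ∑ i : Fin n, ‖nvec i‖ ^ 2 = 1 := Real.sqrt_eq_one.mp h.symm
    simpa [Real.norm_eq_abs, sq_abs] using h2
  have hlap : spaceLaplacian u x t = Gv := by
    rw [spaceLaplacian]
    calc (∑ i : Fin n, iteratedDeriv 2
            (fun s : ℝ => u (x + s • EuclideanSpace.single i 1, t)) 0)
        = ∑ i : Fin n, nvec i ^ 2 * Gv := Finset.sum_congr rfl fun i _ => hLap i
      _ = (∑ i : Fin n, nvec i ^ 2) * Gv := by rw [Finset.sum_mul]
      _ = Gv := by rw [hsum, one_mul]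
  rw [htime, hlap, hu x t]
  have hux : (1 / 2 + 1 / 2 * Real.tanh (-(q / (2 * Real.sqrt (2 * q + 4))) *
      Real.sqrt (ρ / D) * ((inner ℝ nvec x : ℝ) - c * t))) = NWS.H k ξ := by
    simp only [NWS.H, hk, hξ]
  rw [hux, hGv]
  exact NWS.ode D ρ q k c (NWS.H k ξ) hq (NWS.H_pos k ξ) hk2 hck
end

section
/- Let n ≥ 1, let D > 0 and ρ > 0 be real constants, let 𝐧 ∈ ℝⁿ be a unit vector, and set c = √(ρD/2). Then the function u : ℝⁿ × ℝ → ℝ defined by u(x,t) = 1/(1 + exp(√(ρ/(2D))·(⟨𝐧,x⟩ − ct))) satisfies the Zeldovich equation ∂ₜu(x,t) = D·Δₓu(x,t) + ρ·u(x,t)²·(1 − u(x,t)) at every point (x,t) ∈ ℝⁿ × ℝ. -/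
open Real

lemma expDeriv (k y : ℝ) : HasDerivAt (fun y => Real.exp (k*y)) (k * Real.exp (k*y)) y := by
  have := (Real.hasDerivAt_exp (k*y)).comp y ((hasDerivAt_id y).const_mul k)
  simpa [mul_comm, Function.comp_def] using this

lemma key1 (k y : ℝ) : HasDerivAt (fun y => (1 + Real.exp (k*y))⁻¹)
    (-(k * Real.exp (k*y)) / (1 + Real.exp (k*y))^2) y := by
  have h1 : HasDerivAt (fun y => 1 + Real.exp (k*y)) (k * Real.exp (k*y)) y :=
    (expDeriv k y).const_add 1
  have hne : (1 : ℝ) + Real.exp (k*y) ≠ 0 := by positivity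
  exact h1.inv hne

lemma key2 (k y : ℝ) : HasDerivAt (fun y => -(k * Real.exp (k*y)) / (1 + Real.exp (k*y))^2)
    (k^2 * Real.exp (k*y) * (Real.exp (k*y) - 1) / (1 + Real.exp (k*y))^3) y := by
  have hE := expDeriv k y
  have hnum : HasDerivAt (fun y => -(k * Real.exp (k*y))) (-(k * (k * Real.exp (k*y)))) y :=
    (hE.const_mul k).neg
  have hden : HasDerivAt (fun y => (1 + Real.exp (k*y))^2)
      (2 * (1 + Real.exp (k*y))^1 * (k * Real.exp (k*y))) y :=
    (hE.const_add 1).pow 2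
  have h0 : (1 : ℝ) + Real.exp (k*y) ≠ 0 := by positivity
  have hne : ((1 : ℝ) + Real.exp (k*y))^2 ≠ 0 := pow_ne_zero _ h0
  have := hnum.div hden hne
  refine this.congr_deriv ?_
  rw [div_eq_div_iff (by positivity) (by positivity)]
  ring

theorem zeldovich_exact_traveling_wave
    {n : ℕ} (hn : 1 ≤ n) (D ρ : ℝ) (hD : 0 < D) (hρ : 0 < ρ)
    (nvec : EuclideanSpace ℝ (Fin n)) (hnvec : ‖nvec‖ = 1)
    (c : ℝ) (hc : c = Real.sqrt (ρ * D / 2))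
    (u : EuclideanSpace ℝ (Fin n) × ℝ → ℝ)
    (hu : ∀ x t, u (x, t) =
      1 / (1 + Real.exp (Real.sqrt (ρ / (2 * D)) * ((inner ℝ nvec x : ℝ) - c * t)))) :
    ∀ x t, timeDeriv u x t =
      D * spaceLaplacian u x t + ρ * u (x, t) ^ 2 * (1 - u (x, t)) := by
  intro x t
  set k : ℝ := Real.sqrt (ρ / (2 * D)) with hkdef
  have hkpos : 0 < k := Real.sqrt_pos.2 (by positivity)
  have hk2 : k^2 = ρ / (2 * D) := Real.sq_sqrt (by positivity)
  have hck : c * k = ρ / 2 := by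
    rw [hc, hkdef, ← Real.sqrt_mul (by positivity),
      show ρ * D / 2 * (ρ / (2 * D)) = (ρ / 2)^2 by field_simp]
    exact Real.sqrt_sq (by positivity)
  set a : ℝ := (inner ℝ nvec x : ℝ) with hadef
  set ξ : ℝ := a - c * t with hξdef
  set E : ℝ := Real.exp (k * ξ) with hEdef
  have h0 : (1 : ℝ) + E ≠ 0 := by positivity
  -- time derivative
  have hT : timeDeriv u x t = -(k * E) / (1 + E)^2 * (-c) := by
    have hfun : (fun s => u (x, s)) = fun s => (1 + Real.exp (k * (a - c * s)))⁻¹ := by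
      funext s; rw [hu]; rw [one_div]
    have hin : HasDerivAt (fun s : ℝ => a - c * s) (-(c * 1)) t :=
      ((hasDerivAt_id t).const_mul c).const_sub a
    have := (key1 k (a - c * t)).comp t hin
    rw [timeDeriv, hfun]
    simpa [hξdef, hEdef, Function.comp_def] using this.deriv
  -- space Laplacian
  have hL : ∀ i : Fin n, iteratedDeriv 2 (fun s : ℝ => u (x + s • EuclideanSpace.single i 1, t)) 0
      = (nvec i)^2 * (k^2 * E * (E - 1) / (1 + E)^3) := by
    intro i
    set b : ℝ := nvec i with hbdef
    have hfun : (fun s : ℝ => u (x + s • EuclideanSpace.single i 1, t))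
        = fun s => (1 + Real.exp (k * (ξ + b * s)))⁻¹ := by
      funext s
      rw [hu, one_div]
      congr 3
      have : (inner ℝ nvec (x + s • EuclideanSpace.single i (1:ℝ)) : ℝ) = a + s * b := by
        rw [inner_add_right, real_inner_smul_right]
        simp [hadef, hbdef, EuclideanSpace.inner_single_right]
      rw [this]; ring
    have hin : ∀ s : ℝ, HasDerivAt (fun s : ℝ => ξ + b * s) (b * 1) s := fun s =>
      ((hasDerivAt_id s).const_mul b).const_add ξ
    have hd1 : (deriv fun s => (1 + Real.exp (k * (ξ + b * s)))⁻¹)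
        = fun s => -(k * Real.exp (k * (ξ + b * s))) / (1 + Real.exp (k * (ξ + b * s)))^2 * b := by
      funext s
      have := (key1 k (ξ + b * s)).comp s (hin s)
      simpa [Function.comp_def] using this.deriv
    rw [hfun, iteratedDeriv_succ, iteratedDeriv_one, hd1]
    have hd2 : HasDerivAt
        (fun s => -(k * Real.exp (k * (ξ + b * s))) / (1 + Real.exp (k * (ξ + b * s)))^2 * b)
        (k^2 * Real.exp (k * (ξ + b * 0)) * (Real.exp (k * (ξ + b * 0)) - 1)
          / (1 + Real.exp (k * (ξ + b * 0)))^3 * (b * 1) * b) 0 :=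
      by have := (((key2 k (ξ + b * 0)).comp 0 (hin 0)).mul_const b); simpa only [Function.comp_def] using this
    rw [hd2.deriv]
    simp [hEdef]
    ring
  have hsum : ∑ i, (nvec i)^2 = 1 := by
    have h := EuclideanSpace.norm_eq nvec
    rw [hnvec] at h
    have h2 : ∑ i, ‖nvec i‖^2 = 1 := by
      nlinarith [Real.sq_sqrt (by positivity : (0:ℝ) ≤ ∑ i, ‖nvec i‖^2), h.symm]
    simpa [Real.norm_eq_abs, sq_abs] using h2
  have hLap : spaceLaplacian u x t = k^2 * E * (E - 1) / (1 + E)^3 := by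
    rw [spaceLaplacian]
    simp_rw [hL]
    rw [← Finset.sum_mul, hsum, one_mul]
  have huval : u (x, t) = (1 + E)⁻¹ := by rw [hu, one_div]
  rw [hT, hLap, huval]
  have hkD : D * k^2 = ρ / 2 := by rw [hk2]; field_simp
  rw [show c = ρ/2/k by rw [eq_div_iff hkpos.ne']; exact hck,
    show D = ρ/2/k^2 by rw [eq_div_iff (by positivity)]; exact hkD]
  field_simp
  ring
end

section
/- Set c = 5/√6 and define V : ℝ → ℝ by V(ζ) = (1 + exp(ζ/√6))⁻². Then V satisfies the reduced traveling-wave ordinary differential equation of the scaled Fisher's equation: V''(ζ) + c·V'(ζ) + V(ζ)·(1 − V(ζ)) = 0 for all ζ ∈ ℝ. -/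
open Real

private lemma fisher_alg (s e : ℝ) (hs : s ≠ 0) (hs2 : s^2 = 6) (hepos : 0 < e) :
    -(2/s) * ((e/s) * (1+e)⁻¹^3 + e * ((3:ℝ) * (1+e)⁻¹^2 * (-(e/s)/(1+e)^2)))
      + (5/s) * ((2:ℝ) * (1+e)⁻¹^1 * (-(e/s)/(1+e)^2))
      + (1+e)⁻¹^2 * (1 - (1+e)⁻¹^2) = 0 := by
  have hne : (1+e) ≠ 0 := by positivity
  field_simp
  linear_combination (2*e + e^2) * hs2

private lemma inv_pow_deriv (n : ℕ) (ζ : ℝ) :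
    HasDerivAt (fun x : ℝ => (1 + Real.exp (x / Real.sqrt 6))⁻¹ ^ n)
      ((n : ℝ) * (1 + Real.exp (ζ / Real.sqrt 6))⁻¹ ^ (n - 1) *
        (-(Real.exp (ζ / Real.sqrt 6) / Real.sqrt 6) /
          (1 + Real.exp (ζ / Real.sqrt 6)) ^ 2)) ζ := by
  have hne : (1 + Real.exp (ζ / Real.sqrt 6)) ≠ 0 := by positivity
  have h1 : HasDerivAt (fun x : ℝ => x / Real.sqrt 6) (1 / Real.sqrt 6) ζ := by
    simpa using (hasDerivAt_id ζ).div_const (Real.sqrt 6)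
  have h2 : HasDerivAt (fun x : ℝ => 1 + Real.exp (x / Real.sqrt 6))
      (Real.exp (ζ / Real.sqrt 6) / Real.sqrt 6) ζ := by
    have := ((Real.hasDerivAt_exp (ζ / Real.sqrt 6)).comp ζ h1).const_add 1
    simpa [div_eq_mul_inv] using this
  have h3 := (h2.inv hne).pow n
  simpa [Pi.pow_def, Pi.inv_def] using h3

private lemma derivV (V : ℝ → ℝ)
    (hV : ∀ ζ, V ζ = (1 + Real.exp (ζ / Real.sqrt 6))⁻¹ ^ 2) (ζ : ℝ) :
    deriv V ζ = (2 : ℝ) * (1 + Real.exp (ζ / Real.sqrt 6))⁻¹ ^ 1 *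
        (-(Real.exp (ζ / Real.sqrt 6) / Real.sqrt 6) /
          (1 + Real.exp (ζ / Real.sqrt 6)) ^ 2) := by
  have hfun : V = fun x => (1 + Real.exp (x / Real.sqrt 6))⁻¹ ^ 2 := funext hV
  rw [hfun]
  have := (inv_pow_deriv 2 ζ).deriv
  simpa using this

theorem fisher_reduced_ode
    (c : ℝ) (hc : c = 5 / Real.sqrt 6)
    (V : ℝ → ℝ) (hV : ∀ ζ, V ζ = (1 + Real.exp (ζ / Real.sqrt 6))⁻¹ ^ 2) :
    ∀ ζ : ℝ, deriv (deriv V) ζ + c * deriv V ζ + V ζ * (1 - V ζ) = 0 := by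
  intro ζ
  have hs2 : (Real.sqrt 6) ^ 2 = 6 := Real.sq_sqrt (by norm_num)
  have hspos : 0 < Real.sqrt 6 := Real.sqrt_pos.mpr (by norm_num)
  have hsne : Real.sqrt 6 ≠ 0 := ne_of_gt hspos
  set s := Real.sqrt 6 with hs
  set e := Real.exp (ζ / s) with he
  have hepos : 0 < e := Real.exp_pos _
  have hne : (1 + e) ≠ 0 := by positivity
  have hD2 : deriv (deriv V) ζ =
      -(2 / s) * ((e / s) * (1 + e)⁻¹ ^ 3 +
        e * ((3 : ℝ) * (1 + e)⁻¹ ^ 2 * (-(e / s) / (1 + e) ^ 2))) := by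
    have hDVfun : deriv V = fun x =>
        -(2 / s) * (Real.exp (x / s) * (1 + Real.exp (x / s))⁻¹ ^ 3) := by
      funext x
      rw [derivV V hV x]
      have hnx : (1 + Real.exp (x / s)) ≠ 0 := by positivity
      rw [← hs]
      field_simp
    rw [hDVfun]
    have h1 : HasDerivAt (fun x : ℝ => x / s) (1 / s) ζ := by
      simpa using (hasDerivAt_id ζ).div_const s
    have h2 : HasDerivAt (fun x : ℝ => Real.exp (x / s)) (e / s) ζ := by
      have := (Real.hasDerivAt_exp (ζ / s)).comp ζ h1
      simpa [he, div_eq_mul_inv, Function.comp_def] using this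
    have h3 := inv_pow_deriv 3 ζ
    have h4 : HasDerivAt (fun x : ℝ =>
        Real.exp (x / s) * (1 + Real.exp (x / s))⁻¹ ^ 3)
        ((e / s) * (1 + e)⁻¹ ^ 3 +
          e * ((3 : ℝ) * (1 + e)⁻¹ ^ 2 * (-(e / s) / (1 + e) ^ 2))) ζ := by
      have := h2.mul (by simpa [← hs, he] using h3)
      simpa [he, Pi.mul_def] using this
    exact (h4.const_mul (-(2 / s))).deriv
  have hD1 : deriv V ζ = (2 : ℝ) * (1 + e)⁻¹ ^ 1 * (-(e / s) / (1 + e) ^ 2) := by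
    have := derivV V hV ζ
    rw [← hs] at this
    exact this
  have hVζ : V ζ = (1 + e)⁻¹ ^ 2 := by rw [hV ζ, ← he]
  rw [hD2, hD1, hVζ, hc]
  exact fisher_alg s e hsne hs2 hepos
end

section
/- Let q > 0 be real, set c = (q+4)/√(2q+4), and define V : ℝ → ℝ by V(ζ) = (1/2 + (1/2)·tanh(−q·ζ/(2√(2q+4))))^(2/q). Then V satisfies the reduced traveling-wave ordinary differential equation of the scaled Newell–Whitehead–Segel equation: V''(ζ) + c·V'(ζ) + V(ζ)·(1 − V(ζ)^q) = 0 for all ζ ∈ ℝ. -/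
open Real

private lemma tanh_hasDerivAt (x : ℝ) :
    HasDerivAt Real.tanh (1 - Real.tanh x ^ 2) x := by
  have hc : 0 < Real.cosh x := Real.cosh_pos x
  have h := (Real.hasDerivAt_sinh x).div (Real.hasDerivAt_cosh x) hc.ne'
  have hfun : Real.tanh = fun y => Real.sinh y / Real.cosh y :=
    funext fun y => Real.tanh_eq_sinh_div_cosh y
  rw [hfun]
  refine HasDerivAt.congr_deriv h ?_
  have hcs := Real.cosh_sq x
  have hne : Real.cosh x ≠ 0 := hc.ne'
  simp only
  field_simp

private lemma tanh_mem (x : ℝ) : -1 < Real.tanh x ∧ Real.tanh x < 1 := by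
  have hc : 0 < Real.cosh x := Real.cosh_pos x
  have h1 : Real.cosh x - Real.sinh x = Real.exp (-x) := Real.cosh_sub_sinh x
  have h2 : Real.cosh x + Real.sinh x = Real.exp x := Real.cosh_add_sinh x
  have e1 : 0 < Real.exp (-x) := Real.exp_pos _
  have e2 : 0 < Real.exp x := Real.exp_pos _
  rw [Real.tanh_eq_sinh_div_cosh]
  constructor
  · rw [lt_div_iff₀ hc]; nlinarith
  · rw [div_lt_one hc]; linarith

theorem nws_reduced_ode
    (q : ℝ) (hq : 0 < q)
    (c : ℝ) (hc : c = (q + 4) / Real.sqrt (2 * q + 4))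
    (V : ℝ → ℝ)
    (hV : ∀ ζ, V ζ =
      (1 / 2 + 1 / 2 * Real.tanh (-q * ζ / (2 * Real.sqrt (2 * q + 4)))) ^ (2 / q)) :
    ∀ ζ : ℝ, deriv (deriv V) ζ + c * deriv V ζ + V ζ * (1 - V ζ ^ q) = 0 := by
  set s := Real.sqrt (2 * q + 4) with hsdef
  have h24 : (0:ℝ) < 2 * q + 4 := by linarith
  have hs : 0 < s := Real.sqrt_pos.mpr h24
  have hs2 : s ^ 2 = 2 * q + 4 := Real.sq_sqrt h24.le
  set u : ℝ → ℝ := fun ζ => 1 / 2 + 1 / 2 * Real.tanh (-q * ζ / (2 * s)) with hu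
  have hVeq : V = fun ζ => u ζ ^ (2 / q) := funext hV
  have hupos : ∀ ζ, 0 < u ζ := by
    intro ζ; have := (tanh_mem (-q * ζ / (2 * s))).1; simp only [hu]; linarith
  have hult : ∀ ζ, u ζ < 1 := by
    intro ζ; have := (tanh_mem (-q * ζ / (2 * s))).2; simp only [hu]; linarith
  have hu' : ∀ ζ, HasDerivAt u (-(q / s) * (u ζ * (1 - u ζ))) ζ := by
    intro ζ
    have hlin : HasDerivAt (fun ζ : ℝ => -q * ζ / (2 * s)) (-q / (2 * s)) ζ := by
      simpa using ((hasDerivAt_id ζ).const_mul (-q)).div_const (2 * s)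
    have ht := (tanh_hasDerivAt (-q * ζ / (2 * s))).comp ζ hlin
    have h2 := (ht.const_mul (1 / 2 : ℝ)).const_add (1 / 2 : ℝ)
    refine HasDerivAt.congr_deriv h2 ?_
    simp only [hu]
    field_simp
    ring
  have hF : ∀ ζ, HasDerivAt (fun ζ => u ζ ^ (2 / q))
      (-(2 / s) * (u ζ ^ (2 / q) * (1 - u ζ))) ζ := by
    intro ζ
    have h := (hu' ζ).rpow_const (p := 2 / q) (Or.inl (hupos ζ).ne')
    convert h using 1
    have hpow : u ζ ^ (2 / q) = u ζ ^ (2 / q - 1) * u ζ := by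
      rw [← Real.rpow_add_one (hupos ζ).ne']; ring_nf
    rw [hpow]
    field_simp
  have hderiv1 : deriv V = fun ζ => -(2 / s) * (u ζ ^ (2 / q) * (1 - u ζ)) := by
    rw [hVeq]; exact funext fun ζ => (hF ζ).deriv
  intro ζ
  have hW : HasDerivAt (fun ζ => -(2 / s) * (u ζ ^ (2 / q) * (1 - u ζ)))
      (-(2 / s) * ((-(2 / s) * (u ζ ^ (2 / q) * (1 - u ζ))) * (1 - u ζ)
        + u ζ ^ (2 / q) * (-(-(q / s) * (u ζ * (1 - u ζ)))))) ζ :=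
    ((hF ζ).mul ((hu' ζ).const_sub 1)).const_mul (-(2 / s))
  have hd2 : deriv (deriv V) ζ
      = -(2 / s) * ((-(2 / s) * (u ζ ^ (2 / q) * (1 - u ζ))) * (1 - u ζ)
        + u ζ ^ (2 / q) * (-(-(q / s) * (u ζ * (1 - u ζ))))) := by
    rw [hderiv1]; exact hW.deriv
  have hVq : V ζ ^ q = u ζ ^ 2 := by
    rw [hVeq]
    rw [← Real.rpow_natCast (u ζ) 2, ← Real.rpow_mul (hupos ζ).le]
    congr 1
    field_simp
    norm_num
  rw [hd2, hVq, hc, hderiv1, hVeq]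
  set x := u ζ
  set P := x ^ (2 / q) with hP
  field_simp
  have hxP : u ζ ^ (2 / q) = P := rfl
  rw [hxP]
  rw [show u ζ = x from rfl]
  linear_combination (P * (1 - x ^ 2)) * hs2
end

section
/- Let K ⊂ ℝ be a nonempty compact set, let α < β be real numbers, let V : K → ℝ be continuous with α < V(ζ) < β for all ζ ∈ K, and let φ : ℝ → (α, β) be defined by φ(s) = α + (β − α)/(1 + exp(−s)). Let σ : ℝ → ℝ be the logistic sigmoid σ(x) = 1/(1 + exp(−x)). Then for every ε > 0 there exist an integer N ≥ 1 and real constants a₁,…,a_N, b₁,…,b_N, c₁,…,c_N such that |V(ζ) − φ(∑_{i=1}^{N} cᵢ·σ(aᵢ·ζ + bᵢ))| < ε for all ζ ∈ K. -/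
open Real Finset

noncomputable def lsig : ℝ → ℝ := fun x => 1 / (1 + Real.exp (-x))

lemma lsig_denom_pos (x : ℝ) : 0 < 1 + Real.exp (-x) := by positivity

lemma lsig_nonneg (x : ℝ) : 0 ≤ lsig x := by
  unfold lsig; positivity

lemma lsig_le_one (x : ℝ) : lsig x ≤ 1 := by
  unfold lsig
  rw [div_le_one (lsig_denom_pos x)]
  nlinarith [Real.exp_pos (-x)]

lemma lsig_zero : lsig 0 = 1 / 2 := by
  unfold lsig; rw [neg_zero, Real.exp_zero]; norm_num

lemma lsig_le_exp (x : ℝ) : lsig x ≤ Real.exp x := by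
  unfold lsig
  rw [div_le_iff₀ (lsig_denom_pos x)]
  have h : Real.exp x * Real.exp (-x) = 1 := by
    rw [← Real.exp_add]; simp
  nlinarith [Real.exp_pos x]

lemma one_sub_lsig_le_exp (x : ℝ) : 1 - lsig x ≤ Real.exp (-x) := by
  have hd := lsig_denom_pos x
  have h : 1 - lsig x = Real.exp (-x) / (1 + Real.exp (-x)) := by
    unfold lsig; field_simp; ring
  rw [h]
  exact div_le_self (le_of_lt (Real.exp_pos _)) (by nlinarith [Real.exp_pos (-x)])

lemma lsig_hasDerivAt (x : ℝ) :
    HasDerivAt lsig (Real.exp (-x) / (1 + Real.exp (-x)) ^ 2) x := by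
  have h1 : HasDerivAt (fun x : ℝ => -x) (-1) x := (hasDerivAt_id x).neg
  have h2 : HasDerivAt (fun x : ℝ => Real.exp (-x)) (Real.exp (-x) * -1) x := h1.exp
  have h3 : HasDerivAt (fun x : ℝ => 1 + Real.exp (-x)) (Real.exp (-x) * -1) x :=
    h2.const_add 1
  have h4 := h3.inv (ne_of_gt (lsig_denom_pos x))
  have : lsig = fun x : ℝ => (1 + Real.exp (-x))⁻¹ := by
    funext y; simp [lsig, one_div]
  rw [this]
  convert h4 using 1
  · rfl
  · rfl
  · rfl
  · ring

lemma lsig_lipschitz (s t : ℝ) : |lsig s - lsig t| ≤ |s - t| := by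
  have hlip : LipschitzWith 1 lsig := by
    apply lipschitzWith_of_nnnorm_deriv_le
    · intro x; exact (lsig_hasDerivAt x).differentiableAt
    · intro x
      rw [(lsig_hasDerivAt x).deriv]
      have hd := lsig_denom_pos x
      have he := Real.exp_pos (-x)
      have h1 : Real.exp (-x) / (1 + Real.exp (-x)) ^ 2 ≤ 1 := by
        rw [div_le_one (by positivity)]; nlinarith
      simp only [← NNReal.coe_le_coe, coe_nnnorm, Real.norm_eq_abs, NNReal.coe_one]
      rw [abs_of_nonneg (by positivity)]; exact h1
  have := hlip.dist_le_mul s t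
  simpa [Real.dist_eq] using this


section core
variable {W : ℝ → ℝ} {m M h A u : ℝ} {n : ℕ}

set_option maxHeartbeats 1000000 in
/-- Core estimate for a fixed point ζ. -/
lemma core_estimate (hh : 0 < h) (hA : 0 ≤ A) (hu : 0 < u) (hn : 1 ≤ n)
    (hexp : Real.exp (-(A * h)) = (n : ℝ)⁻¹)
    (hM : M = m + n * h)
    (hosc : ∀ p ∈ Set.Icc m M, ∀ q ∈ Set.Icc m M, |p - q| ≤ h → |W p - W q| ≤ u)
    (ζ : ℝ) (hζ : ζ ∈ Set.Icc m M) :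
    |W ζ - (W m + ∑ k ∈ Finset.range n,
      (W (m + (k+1) * h) - W (m + k * h)) * lsig (A * (ζ - (m + ((k:ℝ) + 1/2) * h))))| ≤ 4 * u := by
  obtain ⟨hζm, hζM⟩ := hζ
  set x : ℝ := (ζ - m) / h with hxdef
  have hxh : ζ - m = x * h := by rw [hxdef, div_mul_cancel₀ _ (ne_of_gt hh)]
  have hx0 : 0 ≤ x := by
    apply div_nonneg (by linarith) (le_of_lt hh)
  have hxn : x ≤ n := by
    rw [hxdef, div_le_iff₀ hh]; rw [hM] at hζM; linarith
  have hj0 : (0:ℝ) ≤ x + 1/2 := by linarith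
  set j : ℕ := Nat.floor (x + 1/2) with hjdef
  have hjx1 : (j:ℝ) ≤ x + 1/2 := Nat.floor_le hj0
  have hjx2 : x + 1/2 < j + 1 := Nat.lt_floor_add_one _
  have hjn : j ≤ n := by
    have : j < n + 1 := by
      rw [hjdef, Nat.floor_lt hj0]; push_cast; linarith
    omega
  -- abbreviations
  set d : ℕ → ℝ := fun k => W (m + (k+1) * h) - W (m + k * h) with hddef
  set sg : ℕ → ℝ := fun k => lsig (A * (ζ - (m + ((k:ℝ) + 1/2) * h))) with hsgdef
  set stp : ℕ → ℝ := fun k => if k + 1 ≤ j then 1 else 0 with hstpdef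
  -- membership of grid points
  have htmem : ∀ k : ℕ, k ≤ n → m + k * h ∈ Set.Icc m M := by
    intro k hk
    constructor
    · nlinarith [Nat.cast_nonneg (α := ℝ) k]
    · rw [hM]
      have : (k:ℝ) ≤ n := by exact_mod_cast hk
      nlinarith
  -- oscillation of d
  have hdk : ∀ k, k < n → |d k| ≤ u := by
    intro k hk
    have h1 := htmem (k+1) (by omega)
    have h2 := htmem k (le_of_lt hk)
    push_cast at h1
    have h3 := hosc _ h1 _ h2 (by
      rw [show m + ((k:ℝ) + 1) * h - (m + (k:ℝ) * h) = h by ring, abs_of_pos hh])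
    simpa [hddef] using h3
  -- oscillation at t j
  have hoscj : |W ζ - W (m + j * h)| ≤ u := by
    apply hosc _ ⟨hζm, hζM⟩ _ (htmem j hjn)
    have heq : ζ - (m + j * h) = (x - j) * h := by rw [sub_mul]; linarith [hxh]
    rw [heq, abs_mul, abs_of_pos hh]
    have h1 : |x - (j:ℝ)| ≤ 1/2 := abs_le.2 ⟨by linarith, by linarith⟩
    nlinarith
  -- telescoping
  have htel : ∑ k ∈ Finset.range n, d k * stp k = W (m + j * h) - W m := by
    have h1 : ∀ k ∈ Finset.range n, d k * stp k = if k < j then d k else 0 := by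
      intro k _
      by_cases hk : k < j
      · simp [hstpdef, hk, Nat.succ_le_iff]
      · simp [hstpdef, hk, Nat.succ_le_iff]
    rw [Finset.sum_congr rfl h1]
    have h2 : ∑ k ∈ Finset.range n, (if k < j then d k else 0)
        = ∑ k ∈ Finset.range j, (if k < j then d k else 0) := by
      symm
      apply Finset.sum_subset (Finset.range_subset_range.2 hjn)
      intro k _ hk
      rw [Finset.mem_range] at hk
      simp [hk]
    rw [h2, Finset.sum_congr rfl (fun k hk => if_pos (Finset.mem_range.1 hk))]
    have h3 := Finset.sum_range_sub (fun k => W (m + k * h)) j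
    simpa [hddef] using h3
  -- step condition
  have hstep : ∀ k : ℕ, (m + ((k:ℝ) + 1/2) * h ≤ ζ ↔ k + 1 ≤ j) := by
    intro k
    rw [hjdef, Nat.le_floor_iff hj0]
    push_cast
    constructor
    · intro H
      have : ((k:ℝ) + 1/2) * h ≤ x * h := by rw [← hxh]; linarith
      have := le_of_mul_le_mul_right this hh
      linarith
    · intro H
      have h1 : ((k:ℝ) + 1/2) ≤ x := by linarith
      have : ((k:ℝ) + 1/2) * h ≤ x * h := by nlinarith
      rw [← hxh] at this; linarith
  -- error bound for each unit
  have hE : ∀ k ∈ Finset.range n, |sg k - stp k| ≤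
      (if k + 1 = j then 1 else 0) + (if k = j then 1 else 0) + Real.exp (-(A * h)) := by
    intro k hk
    have hsg0 : 0 ≤ sg k := by rw [hsgdef]; exact lsig_nonneg _
    have hsg1 : sg k ≤ 1 := by rw [hsgdef]; exact lsig_le_one _
    have hexp_pos : 0 < Real.exp (-(A * h)) := Real.exp_pos _
    by_cases hcase : k + 1 ≤ j
    · have hstp1 : stp k = 1 := if_pos hcase
      rw [hstp1, abs_sub_comm, abs_of_nonneg (by linarith)]
      by_cases hkj : k + 1 = j
      · rw [if_pos hkj]
        have : (0:ℝ) ≤ if k = j then 1 else 0 := by split <;> norm_num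
        linarith
      · -- k + 1 < j, so ζ - s(k+1) ≥ h
        have hklt : k + 2 ≤ j := by omega
        have hdist : h ≤ ζ - (m + ((k:ℝ) + 1/2) * h) := by
          have hjr : (k:ℝ) + 2 ≤ j := by exact_mod_cast hklt
          have : ζ - m = x * h := hxh
          have hxj : (j:ℝ) - 1/2 ≤ x := by linarith
          nlinarith
        have h1 : 1 - sg k ≤ Real.exp (-(A * (ζ - (m + ((k:ℝ) + 1/2) * h)))) := by
          rw [hsgdef]; exact one_sub_lsig_le_exp _
        have h2 : Real.exp (-(A * (ζ - (m + ((k:ℝ) + 1/2) * h)))) ≤ Real.exp (-(A * h)) := by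
          apply Real.exp_le_exp.2
          have := mul_le_mul_of_nonneg_left hdist hA
          linarith
        have i1 : (0:ℝ) ≤ if k + 1 = j then 1 else 0 := by split <;> norm_num
        have i2 : (0:ℝ) ≤ if k = j then 1 else 0 := by split <;> norm_num
        linarith
    · have hstp0 : stp k = 0 := if_neg hcase
      rw [hstp0, sub_zero, abs_of_nonneg hsg0]
      by_cases hkj : k = j
      · rw [if_pos hkj]
        have : (0:ℝ) ≤ if k + 1 = j then 1 else 0 := by split <;> norm_num
        linarith
      · have hklt : j + 1 ≤ k := by omega
        have hζs : ¬ (m + ((k:ℝ) + 1/2) * h ≤ ζ) := by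
          rw [hstep k]; omega
        push_neg at hζs
        have hdist : h ≤ (m + ((k:ℝ) + 1/2) * h) - ζ := by
          have hjr : (j:ℝ) + 1 ≤ k := by exact_mod_cast hklt
          have hxj : x < (j:ℝ) + 1/2 := by linarith
          have : ζ - m = x * h := hxh
          nlinarith
        have h1 : sg k ≤ Real.exp (A * (ζ - (m + ((k:ℝ) + 1/2) * h))) := by
          rw [hsgdef]; exact lsig_le_exp _
        have h2 : Real.exp (A * (ζ - (m + ((k:ℝ) + 1/2) * h))) ≤ Real.exp (-(A * h)) := by
          apply Real.exp_le_exp.2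
          have := mul_le_mul_of_nonneg_left hdist hA
          nlinarith
        have i1 : (0:ℝ) ≤ if k + 1 = j then 1 else 0 := by split <;> norm_num
        have i2 : (0:ℝ) ≤ if k = j then 1 else 0 := by split <;> norm_num
        linarith
  -- sum of errors
  have hsumB : ∑ k ∈ Finset.range n, ((if k + 1 = j then (1:ℝ) else 0)
      + (if k = j then 1 else 0) + Real.exp (-(A * h))) ≤ 3 := by
    rw [Finset.sum_add_distrib, Finset.sum_add_distrib]
    have b1 : ∑ k ∈ Finset.range n, (if k + 1 = j then (1:ℝ) else 0) ≤ 1 := by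
      have : ∀ k ∈ Finset.range n, (if k + 1 = j then (1:ℝ) else 0)
          ≤ (if k = j - 1 then 1 else 0) := by
        intro k _
        by_cases hk : k + 1 = j
        · rw [if_pos hk, if_pos (by omega)]
        · rw [if_neg hk]; split <;> norm_num
      calc ∑ k ∈ Finset.range n, (if k + 1 = j then (1:ℝ) else 0)
          ≤ ∑ k ∈ Finset.range n, (if k = j - 1 then (1:ℝ) else 0) :=
            Finset.sum_le_sum this
        _ ≤ 1 := by rw [Finset.sum_ite_eq']; split <;> norm_num
    have b2 : ∑ k ∈ Finset.range n, (if k = j then (1:ℝ) else 0) ≤ 1 := by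
      rw [Finset.sum_ite_eq']; split <;> norm_num
    have b3 : ∑ k ∈ Finset.range n, Real.exp (-(A * h)) = 1 := by
      rw [Finset.sum_const, Finset.card_range, hexp, nsmul_eq_mul]
      rw [mul_inv_cancel₀ (Nat.cast_ne_zero.2 (by omega))]
    linarith
  -- putting it together
  have hsum_err : |∑ k ∈ Finset.range n, d k * (sg k - stp k)| ≤ 3 * u := by
    calc |∑ k ∈ Finset.range n, d k * (sg k - stp k)|
        ≤ ∑ k ∈ Finset.range n, |d k * (sg k - stp k)| := Finset.abs_sum_le_sum_abs _ _
      _ ≤ ∑ k ∈ Finset.range n, u * ((if k + 1 = j then 1 else 0)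
            + (if k = j then 1 else 0) + Real.exp (-(A * h))) := by
          apply Finset.sum_le_sum
          intro k hk
          rw [abs_mul]
          apply mul_le_mul (hdk k (Finset.mem_range.1 hk)) (hE k hk) (abs_nonneg _)
            (le_of_lt hu)
      _ = u * ∑ k ∈ Finset.range n, ((if k + 1 = j then (1:ℝ) else 0)
            + (if k = j then 1 else 0) + Real.exp (-(A * h))) := by
          rw [Finset.mul_sum]
      _ ≤ u * 3 := by
          apply mul_le_mul_of_nonneg_left hsumB (le_of_lt hu)
      _ = 3 * u := by ring
  have hdecomp : W ζ - (W m + ∑ k ∈ Finset.range n, d k * sg k)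
      = (W ζ - W (m + j * h)) - ∑ k ∈ Finset.range n, d k * (sg k - stp k) := by
    have : ∑ k ∈ Finset.range n, d k * (sg k - stp k)
        = (∑ k ∈ Finset.range n, d k * sg k) - (W (m + j * h) - W m) := by
      rw [← htel, ← Finset.sum_sub_distrib]
      apply Finset.sum_congr rfl
      intro k _; ring
    rw [this]; ring
  calc |W ζ - (W m + ∑ k ∈ Finset.range n, d k * sg k)|
      = |(W ζ - W (m + j * h)) - ∑ k ∈ Finset.range n, d k * (sg k - stp k)| := by
        rw [hdecomp]
    _ ≤ |W ζ - W (m + j * h)| + |∑ k ∈ Finset.range n, d k * (sg k - stp k)| :=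
        abs_sub _ _
    _ ≤ u + 3 * u := add_le_add hoscj hsum_err
    _ = 4 * u := by ring

end core

set_option maxHeartbeats 1000000 in
lemma lsig_network_approx (W : ℝ → ℝ) (hW : Continuous W) (m M : ℝ) (hmM : m < M)
    (δ : ℝ) (hδ : 0 < δ) :
    ∃ N : ℕ, 1 ≤ N ∧ ∃ a b c : Fin N → ℝ, ∀ ζ ∈ Set.Icc m M,
      |W ζ - ∑ i : Fin N, c i * lsig (a i * ζ + b i)| ≤ δ := by
  set u := δ / 5 with hudef
  have hu : 0 < u := by rw [hudef]; positivity
  have hUC : UniformContinuousOn W (Set.Icc m M) :=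
    isCompact_Icc.uniformContinuousOn_of_continuous hW.continuousOn
  rw [Metric.uniformContinuousOn_iff] at hUC
  obtain ⟨η, hη, hηu⟩ := hUC u hu
  obtain ⟨n0, hn0⟩ := exists_nat_gt ((M - m) / η)
  set n := n0 + 1 with hndef
  have hn1 : 1 ≤ n := by omega
  have hnpos : (0:ℝ) < n := by positivity
  have hngt : (M - m) / η < n := by
    have : (n0 : ℝ) ≤ n := by exact_mod_cast Nat.le_succ n0
    linarith
  set h := (M - m) / n with hhdef
  have hh : 0 < h := by rw [hhdef]; exact div_pos (by linarith) hnpos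
  have hhη : h < η := by
    rw [hhdef, div_lt_iff₀ hnpos]
    rw [div_lt_iff₀ hη] at hngt
    linarith
  set A := Real.log n / h with hAdef
  have hA : 0 ≤ A := by
    apply div_nonneg _ (le_of_lt hh)
    apply Real.log_nonneg
    exact_mod_cast hn1
  have hexp : Real.exp (-(A * h)) = (n : ℝ)⁻¹ := by
    rw [hAdef, div_mul_cancel₀ _ (ne_of_gt hh), Real.exp_neg, Real.exp_log hnpos]
  have hM : M = m + n * h := by
    rw [hhdef]; field_simp; ring
  have hosc : ∀ p ∈ Set.Icc m M, ∀ q ∈ Set.Icc m M, |p - q| ≤ h → |W p - W q| ≤ u := by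
    intro p hp q hq hpq
    have := hηu p hp q hq (by rw [Real.dist_eq]; linarith)
    rw [Real.dist_eq] at this; linarith
  refine ⟨n + 1, by omega,
    (fun i => if i.val = 0 then 0 else A),
    (fun i => if i.val = 0 then 0 else -(A * (m + ((i.val : ℝ) - 1 + 1/2) * h))),
    (fun i => if i.val = 0 then 2 * W m
      else W (m + (i.val : ℝ) * h) - W (m + ((i.val : ℝ) - 1) * h)), ?_⟩
  intro ζ hζ
  have hcore := core_estimate hh hA hu hn1 hexp hM hosc ζ hζ
  have hsum : ∑ i : Fin (n + 1),
      (if i.val = 0 then 2 * W m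
        else W (m + (i.val : ℝ) * h) - W (m + ((i.val : ℝ) - 1) * h)) *
        lsig ((if i.val = 0 then 0 else A) * ζ
          + (if i.val = 0 then 0 else -(A * (m + ((i.val : ℝ) - 1 + 1/2) * h))))
      = W m + ∑ k ∈ Finset.range n,
        (W (m + ((k:ℝ) + 1) * h) - W (m + (k:ℝ) * h))
          * lsig (A * (ζ - (m + ((k:ℝ) + 1/2) * h))) := by
    rw [Fin.sum_univ_succ]
    congr 1
    · norm_num [lsig_zero]
      ring
    · rw [← Fin.sum_univ_eq_sum_range (fun k =>
        (W (m + ((k:ℝ) + 1) * h) - W (m + (k:ℝ) * h))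
          * lsig (A * (ζ - (m + ((k:ℝ) + 1/2) * h)))) n]
      apply Finset.sum_congr rfl
      intro i _
      have hne : (i.succ : Fin (n+1)).val ≠ 0 := by simp [Fin.val_succ]
      simp only [if_neg hne, Fin.val_succ]
      push_cast
      ring_nf
  rw [hsum]
  calc |W ζ - (W m + ∑ k ∈ Finset.range n,
        (W (m + ((k:ℝ) + 1) * h) - W (m + (k:ℝ) * h))
          * lsig (A * (ζ - (m + ((k:ℝ) + 1/2) * h))))| ≤ 4 * u := hcore
    _ ≤ δ := by rw [hudef]; linarith

theorem universal_approximation_under_constraints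
    (K : Set ℝ) (hK : IsCompact K) (hKne : K.Nonempty)
    (α β : ℝ) (hαβ : α < β)
    (V : ℝ → ℝ) (hVcont : ContinuousOn V K)
    (hVrange : ∀ ζ ∈ K, V ζ ∈ Set.Ioo α β)
    (φ : ℝ → ℝ) (hφ : ∀ s, φ s = α + (β - α) / (1 + Real.exp (-s)))
    (σ : ℝ → ℝ) (hσ : ∀ x, σ x = 1 / (1 + Real.exp (-x))) :
    ∀ ε > 0, ∃ (N : ℕ), 1 ≤ N ∧ ∃ a b c : Fin N → ℝ,
      ∀ ζ ∈ K, |V ζ - φ (∑ i : Fin N, c i * σ (a i * ζ + b i))| < ε := by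
  intro ε hε
  have hKc : IsClosed K := hK.isClosed
  -- the inverse transform of V, as a continuous map on K
  have hcontf : Continuous fun ζ : K => Real.log ((V ζ - α) / (β - V ζ)) := by
    have hVr : Continuous fun ζ : K => V ζ := hVcont.restrict
    apply Continuous.log
    · apply Continuous.div (hVr.sub continuous_const) (continuous_const.sub hVr)
      intro ζ
      have := hVrange ζ ζ.2
      have : β - V ζ > 0 := by have := hVrange ζ ζ.2; linarith [this.2]
      exact ne_of_gt this
    · intro ζ
      have h1 := (hVrange ζ ζ.2).1
      have h2 := (hVrange ζ ζ.2).2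
      exact ne_of_gt (div_pos (by linarith) (by linarith))
  obtain ⟨g, hg⟩ := ContinuousMap.exists_restrict_eq (X := ℝ) hKc
    ⟨fun ζ : K => Real.log ((V ζ - α) / (β - V ζ)), hcontf⟩
  have hgval : ∀ ζ (hζ : ζ ∈ K), g ζ = Real.log ((V ζ - α) / (β - V ζ)) := by
    intro ζ hζ
    exact DFunLike.congr_fun hg ⟨ζ, hζ⟩
  have hφg : ∀ ζ ∈ K, φ (g ζ) = V ζ := by
    intro ζ hζ
    have h1 := (hVrange ζ hζ).1
    have h2 := (hVrange ζ hζ).2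
    rw [hgval ζ hζ, hφ]
    rw [Real.exp_neg, Real.exp_log (div_pos (by linarith) (by linarith))]
    rw [inv_div]
    have hne1 : V ζ - α ≠ 0 := by linarith
    have hne3 : β - α ≠ 0 := by linarith
    have hstep : 1 + (β - V ζ) / (V ζ - α) = (β - α) / (V ζ - α) := by
      field_simp; ring
    rw [hstep, div_div_eq_mul_div, mul_comm, mul_div_assoc, div_self hne3, mul_one]
    ring
  -- Lipschitz bound for φ
  have hφlip : ∀ s t : ℝ, |φ s - φ t| ≤ (β - α) * |s - t| := by
    intro s t
    have heq : φ s - φ t = (β - α) * (lsig s - lsig t) := by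
      rw [hφ, hφ]; unfold lsig; ring
    rw [heq, abs_mul, abs_of_pos (by linarith : (0:ℝ) < β - α)]
    exact mul_le_mul_of_nonneg_left (lsig_lipschitz s t) (by linarith)
  -- bounding interval
  obtain ⟨r, hr⟩ := hK.isBounded.subset_closedBall 0
  have hKI : K ⊆ Set.Icc (-(|r| + 1)) (|r| + 1) := by
    intro ζ hζ
    have := hr hζ
    rw [Metric.mem_closedBall, Real.dist_eq, sub_zero] at this
    have h1 : |ζ| ≤ |r| := le_trans this (le_abs_self r)
    rw [abs_le] at h1
    constructor <;> [linarith [h1.1]; linarith [h1.2]]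
  set δ := ε / (2 * (β - α)) with hδdef
  have hδ : 0 < δ := by rw [hδdef]; exact div_pos hε (by linarith)
  obtain ⟨N, hN1, a, b, c, hab⟩ := lsig_network_approx g g.continuous
    (-(|r| + 1)) (|r| + 1) (by linarith [abs_nonneg r]) δ hδ
  refine ⟨N, hN1, a, b, c, ?_⟩
  intro ζ hζ
  have hσl : ∀ x, σ x = lsig x := fun x => by rw [hσ]; rfl
  simp only [hσl]
  have h1 := hab ζ (hKI hζ)
  rw [← hφg ζ hζ]
  calc |φ (g ζ) - φ (∑ i : Fin N, c i * lsig (a i * ζ + b i))|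
      ≤ (β - α) * |g ζ - ∑ i : Fin N, c i * lsig (a i * ζ + b i)| := hφlip _ _
    _ ≤ (β - α) * δ := mul_le_mul_of_nonneg_left h1 (by linarith)
    _ = ε / 2 := by
        rw [hδdef]
        have hne : β - α ≠ 0 := by linarith
        field_simp
    _ < ε := by linarith
end

section
/- Let Ω ⊂ ℝ be a nonempty compact set, let T > 0, let v₋ < v₊ be real numbers, let c ∈ ℝ, and let V : ℝ → ℝ be continuous with v₋ < V(ζ) < v₊ for all ζ ∈ ℝ. Define the traveling wave v : Ω × [0,T] → ℝ by v(ξ,τ) = V(ξ − c·τ), let σ be the logistic sigmoid σ(x) = 1/(1 + exp(−x)), and let φ(s) = v₋ + (v₊ − v₋)/(1 + exp(−s)). Then for every ε > 0 there exist an integer N ≥ 1, real constants a₁,…,a_N, b₁,…,b_N, c₁,…,c_N, and a predicted wave speed ω ∈ ℝ (namely ω = c) such that the network output v̂(ξ,τ) = φ(∑_{i=1}^{N} cᵢ·σ(aᵢ·(ξ − ω·τ) + bᵢ)) satisfies |v(ξ,τ) − v̂(ξ,τ)| < ε for all ξ ∈ Ω and all τ ∈ [0,T]. -/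
set_option maxHeartbeats 1000000

open Real

lemma sg_pos (x : ℝ) : 0 < 1 / (1 + Real.exp (-x)) := by positivity

lemma sg_le_one (x : ℝ) : 1 / (1 + Real.exp (-x)) ≤ 1 := by
  rw [div_le_one (by positivity)]
  nlinarith [Real.exp_pos (-x)]

lemma one_sub_sg_le_exp (t : ℝ) :
    1 - 1 / (1 + Real.exp (-t)) ≤ Real.exp (-t) := by
  have h := Real.exp_pos (-t)
  have h1 : (0:ℝ) < 1 + Real.exp (-t) := by positivity
  have heq : 1 - 1 / (1 + Real.exp (-t)) = Real.exp (-t) / (1 + Real.exp (-t)) := by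
    field_simp
    ring
  rw [heq, div_le_iff₀ h1]
  nlinarith

lemma sg_le_exp (t : ℝ) : 1 / (1 + Real.exp (-t)) ≤ Real.exp t := by
  have h := Real.exp_pos (-t)
  have h2 := Real.exp_pos t
  have hme : Real.exp t * Real.exp (-t) = 1 := by
    rw [← Real.exp_add]; simp
  rw [div_le_iff₀ (by positivity)]
  nlinarith

lemma one_sub_sg_le_half {t : ℝ} (ht : 0 ≤ t) :
    1 - 1 / (1 + Real.exp (-t)) ≤ 1/2 := by
  have h := Real.exp_pos (-t)
  have h3 : Real.exp (-t) ≤ 1 := Real.exp_le_one_iff.mpr (by linarith)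
  have h1 : (0:ℝ) < 1 + Real.exp (-t) := by positivity
  have heq : 1 - 1 / (1 + Real.exp (-t)) = Real.exp (-t) / (1 + Real.exp (-t)) := by
    field_simp
    ring
  rw [heq, div_le_iff₀ h1]
  nlinarith

lemma sg_le_half {t : ℝ} (ht : t ≤ 0) : 1 / (1 + Real.exp (-t)) ≤ 1/2 := by
  have h3 : 1 ≤ Real.exp (-t) := Real.one_le_exp_iff.mpr (by linarith)
  rw [div_le_iff₀ (by positivity)]
  nlinarith

lemma sg_lip (s t : ℝ) :
    |1 / (1 + Real.exp (-s)) - 1 / (1 + Real.exp (-t))| ≤ |s - t| := by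
  wlog hst : t ≤ s generalizing s t
  · rw [abs_sub_comm, abs_sub_comm s t]; exact this t s (le_of_not_ge hst)
  have he1 := Real.exp_pos (-s)
  have he2 := Real.exp_pos (-t)
  have hmono : 1 / (1 + Real.exp (-t)) ≤ 1 / (1 + Real.exp (-s)) := by
    apply one_div_le_one_div_of_le (by positivity)
    have := Real.exp_le_exp.mpr (neg_le_neg hst)
    linarith
  rw [abs_of_nonneg (by linarith), abs_of_nonneg (by linarith)]
  have key : Real.exp (-t) - Real.exp (-s) ≤ (s - t) * Real.exp (-t) := by
    have h1 : Real.exp (t - s) * Real.exp (-t) = Real.exp (-s) := by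
      rw [← Real.exp_add]; ring_nf
    nlinarith [Real.add_one_le_exp (t - s)]
  have hd1 : (0:ℝ) < 1 + Real.exp (-s) := by positivity
  have hd2 : (0:ℝ) < 1 + Real.exp (-t) := by positivity
  rw [div_sub_div _ _ (ne_of_gt hd1) (ne_of_gt hd2), div_le_iff₀ (by positivity)]
  nlinarith [mul_nonneg (sub_nonneg.2 hst) (mul_pos he1 he2).le,
    mul_nonneg (sub_nonneg.2 hst) he1.le, mul_nonneg (sub_nonneg.2 hst) he2.le]

lemma ind_sum_le (n k : ℕ) :
    ∑ j ∈ Finset.range n, (if j + 1 = k then (1:ℝ)/2 else 0) ≤ 1/2 := by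
  rcases k with _ | k'
  · simp
  · have hc : ∀ j, (if j + 1 = k' + 1 then (1:ℝ)/2 else 0)
        = (if j = k' then (1:ℝ)/2 else 0) := by
      intro j; simp
    rw [Finset.sum_congr rfl (fun j _ => hc j), Finset.sum_ite_eq' (Finset.range n) k']
    split <;> norm_num

lemma range_ite_sum (n k : ℕ) (hk : k ≤ n) (f : ℕ → ℝ) :
    ∑ j ∈ Finset.range n, (if j < k then f j else 0) = ∑ j ∈ Finset.range k, f j := by
  rw [← Finset.sum_filter]
  congr 1
  ext j; simp; omega

theorem universal_approximation_traveling_wave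
    (Ω : Set ℝ) (hΩ : IsCompact Ω) (hΩne : Ω.Nonempty)
    (T : ℝ) (hT : 0 < T)
    (vminus vplus : ℝ) (hvv : vminus < vplus) (c : ℝ)
    (V : ℝ → ℝ) (hVcont : Continuous V)
    (hVrange : ∀ ζ : ℝ, V ζ ∈ Set.Ioo vminus vplus)
    (v : ℝ → ℝ → ℝ) (hv : ∀ ξ τ, v ξ τ = V (ξ - c * τ))
    (σ : ℝ → ℝ) (hσ : ∀ x, σ x = 1 / (1 + Real.exp (-x)))
    (φ : ℝ → ℝ) (hφ : ∀ s, φ s = vminus + (vplus - vminus) / (1 + Real.exp (-s))) :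
    ∀ ε > 0, ∃ (N : ℕ), 1 ≤ N ∧ ∃ a b cc : Fin N → ℝ, ∃ ω : ℝ, ω = c ∧
      ∀ ξ ∈ Ω, ∀ τ ∈ Set.Icc (0 : ℝ) T,
        |v ξ τ - φ (∑ i : Fin N, cc i * σ (a i * (ξ - ω * τ) + b i))| < ε := by
  intro ε hε
  -- bound Ω
  obtain ⟨r, hr⟩ := hΩ.isBounded.subset_closedBall 0
  have hr0 : 0 ≤ r := by
    obtain ⟨x, hx⟩ := hΩne
    have hxr := hr hx
    simp only [Metric.mem_closedBall, Real.dist_eq, sub_zero] at hxr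
    linarith [abs_nonneg x]
  set m : ℝ := -(r + |c| * T) - 1 with hm
  set M : ℝ := r + |c| * T + 1 with hM
  have hcT : 0 ≤ |c| * T := by positivity
  have hMm : (0:ℝ) < M - m := by rw [hM, hm]; linarith
  have hzmem : ∀ ξ ∈ Ω, ∀ τ ∈ Set.Icc (0:ℝ) T, ξ - c * τ ∈ Set.Icc m M := by
    intro ξ hξ τ hτ
    have h1 : |ξ| ≤ r := by
      have := hr hξ
      simpa only [Metric.mem_closedBall, Real.dist_eq, sub_zero] using this
    have h2 : |c * τ| ≤ |c| * T := by
      rw [abs_mul]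
      have : |τ| ≤ T := by rw [abs_of_nonneg hτ.1]; exact hτ.2
      exact mul_le_mul_of_nonneg_left this (abs_nonneg c)
    have h1' := abs_le.1 h1
    have h2' := abs_le.1 h2
    constructor
    · rw [hm]; linarith [h1'.1, h2'.2]
    · rw [hM]; linarith [h1'.2, h2'.1]
  -- the inverse link function
  set L : ℝ := vplus - vminus with hL
  have hL0 : 0 < L := by rw [hL]; linarith
  set U : ℝ → ℝ := fun ζ => Real.log ((V ζ - vminus) / (vplus - V ζ)) with hU
  have hphiU : ∀ ζ, φ (U ζ) = V ζ := by
    intro x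
    have h0 := hVrange x
    simp only [Set.mem_Ioo] at h0
    have h1 : 0 < V x - vminus := by linarith [h0.1]
    have h2 : 0 < vplus - V x := by linarith [h0.2]
    rw [hφ, hU]
    simp only
    rw [← Real.log_inv, Real.exp_log (by positivity), inv_div]
    have hd : 1 + (vplus - V x) / (V x - vminus) = (vplus - vminus) / (V x - vminus) := by
      field_simp
      ring
    rw [hd, div_div_eq_mul_div, mul_div_assoc, mul_comm,
      div_mul_cancel₀ _ (by linarith : vplus - vminus ≠ 0)]
    ring
  have hUcont : Continuous U := by
    apply Continuous.log
    · refine (hVcont.sub continuous_const).div (continuous_const.sub hVcont) (fun x => ?_)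
      have := hVrange x; simp only [Set.mem_Ioo] at this; intro hc; linarith [this.2]
    · intro x
      have := hVrange x
      simp only [Set.mem_Ioo] at this
      have h1 : 0 < V x - vminus := by linarith
      have h2 : 0 < vplus - V x := by linarith
      positivity
  -- target accuracy for preactivation
  set dl : ℝ := ε / (4 * L) with hdl
  have hdl0 : 0 < dl := by rw [hdl]; positivity
  -- uniform continuity modulus on Icc m M
  obtain ⟨h, hh0, hmod⟩ : ∃ h > 0, ∀ x ∈ Set.Icc m M, ∀ y ∈ Set.Icc m M,
      dist x y < h → dist (U x) (U y) < dl := by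
    have hc := (isCompact_Icc : IsCompact (Set.Icc m M)).uniformContinuousOn_of_continuous
      hUcont.continuousOn
    rw [Metric.uniformContinuousOn_iff] at hc
    obtain ⟨h, hh0, hmod⟩ := hc dl hdl0
    exact ⟨h, hh0, fun x hx y hy hxy => hmod x hx y hy hxy⟩
  -- discretization
  set n : ℕ := ⌈(M - m) / h⌉₊ + 1 with hn
  have hn1 : 1 ≤ n := Nat.le_add_left 1 _
  have hn0R : (0:ℝ) < n := by positivity
  set step : ℝ := (M - m) / n with hstep
  have hstep0 : 0 < step := by rw [hstep]; positivity
  have hnstep : (n:ℝ) * step = M - m := by rw [hstep]; field_simp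
  have hstep_h : step < h := by
    have hceil : (M - m) / h ≤ (⌈(M - m) / h⌉₊ : ℝ) := Nat.le_ceil _
    have hlt : (M - m) / h < (n:ℝ) := by
      rw [hn]; push_cast; linarith
    have : M - m < (n:ℝ) * h := by
      rw [div_lt_iff₀ hh0] at hlt; linarith
    rw [hstep, div_lt_iff₀ hn0R]; linarith
  -- slope
  set A : ℝ := (Real.log n + 1) / step with hA
  have hlogn : 0 ≤ Real.log n := Real.log_nonneg (by exact_mod_cast hn1)
  have hA0 : 0 < A := by rw [hA]; positivity
  have hAexp : Real.exp (-(A * step)) ≤ 1 / n := by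
    have hAs : A * step = Real.log n + 1 := by
      rw [hA, div_mul_cancel₀ _ (ne_of_gt hstep0)]
    rw [hAs, neg_add, Real.exp_add, Real.exp_neg, Real.exp_log hn0R, one_div]
    have he1 : Real.exp (-1) ≤ 1 := Real.exp_le_one_iff.mpr (by norm_num)
    nlinarith [inv_pos.mpr hn0R, Real.exp_pos (-1:ℝ)]
  -- partition points
  set xp : ℕ → ℝ := fun j => m + j * step with hxp
  have hxpval : ∀ j : ℕ, xp j = m + j * step := fun j => rfl
  -- the network
  refine ⟨n + 1, Nat.le_add_left 1 n,
    (fun i => if (i:ℕ) = 0 then 0 else A),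
    (fun i => if (i:ℕ) = 0 then 0 else -(A * xp (i:ℕ))),
    (fun i => if (i:ℕ) = 0 then 2 * U (xp 0) else U (xp (i:ℕ)) - U (xp ((i:ℕ) - 1))),
    c, rfl, ?_⟩
  intro ξ hξ τ hτ
  set ζ : ℝ := ξ - c * τ with hζ
  have hζmem : ζ ∈ Set.Icc m M := hzmem ξ hξ τ hτ
  rw [hv]
  -- rewrite the network preactivation
  set G : ℝ := U (xp 0) + ∑ i : Fin n,
      (U (xp ((i:ℕ) + 1)) - U (xp (i:ℕ))) * (1 / (1 + Real.exp (-(A * (ζ - xp ((i:ℕ) + 1))))))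
    with hG
  have hnetG : (∑ i : Fin (n+1),
      (if (i:ℕ) = 0 then 0 else U (xp (i:ℕ)) - U (xp ((i:ℕ) - 1))) * 0) = 0 := by simp
  have hsum_eq : (∑ i : Fin (n+1),
      (if (i:ℕ) = 0 then 2 * U (xp 0) else U (xp (i:ℕ)) - U (xp ((i:ℕ) - 1))) *
        σ ((if (i:ℕ) = 0 then 0 else A) * ζ + (if (i:ℕ) = 0 then 0 else -(A * xp (i:ℕ))))) = G := by
    rw [Fin.sum_univ_succ]
    have h0 : ((0 : Fin (n+1)) : ℕ) = 0 := rfl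
    rw [hG]
    congr 1
    · simp only [h0, if_pos rfl, hσ]
      norm_num [Real.exp_zero]
      ring
    · apply Finset.sum_congr rfl
      intro i _
      have h1 : ((i.succ : Fin (n+1)) : ℕ) = (i:ℕ) + 1 := rfl
      simp only [h1, if_neg (Nat.succ_ne_zero (i:ℕ)), hσ, Nat.add_sub_cancel]
      rw [show A * ζ + -(A * xp ((i:ℕ) + 1)) = A * (ζ - xp ((i:ℕ) + 1)) by ring]
  rw [hsum_eq, ← hphiU ζ]
  -- Lipschitz bound for φ
  have hφlip : ∀ s t : ℝ, |φ s - φ t| ≤ L * |s - t| := by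
    intro s t
    have heq : φ s - φ t = L * (1 / (1 + Real.exp (-s)) - 1 / (1 + Real.exp (-t))) := by
      rw [hφ s, hφ t, hL]; ring
    rw [heq, abs_mul, abs_of_pos hL0]
    exact mul_le_mul_of_nonneg_left (sg_lip s t) hL0.le
  -- the key estimate |U ζ - G| ≤ 3 dl
  set k : ℕ := ⌊(ζ - m) / step⌋₊ with hk
  have hζm : 0 ≤ ζ - m := by linarith [hζmem.1]
  have hkn : k ≤ n := by
    have h1 : (ζ - m) / step ≤ (n:ℝ) := by
      rw [div_le_iff₀ hstep0]
      have := hζmem.2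
      linarith [hnstep]
    calc k ≤ ⌊(n:ℝ)⌋₊ := Nat.floor_le_floor h1
    _ = n := Nat.floor_natCast n
  have hk1 : (k:ℝ) * step ≤ ζ - m := by
    have := Nat.floor_le (by positivity : (0:ℝ) ≤ (ζ - m) / step)
    rw [← hk] at this
    calc (k:ℝ) * step ≤ (ζ - m) / step * step := by
          exact mul_le_mul_of_nonneg_right this hstep0.le
    _ = ζ - m := by field_simp
  have hk2 : ζ - m < ((k:ℝ) + 1) * step := by
    have := Nat.lt_floor_add_one ((ζ - m) / step)
    rw [← hk] at this
    rw [div_lt_iff₀ hstep0] at this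
    linarith
  have hxpk_mem : xp k ∈ Set.Icc m M := by
    constructor
    · rw [hxpval]
      have := mul_nonneg (Nat.cast_nonneg k : (0:ℝ) ≤ k) hstep0.le
      linarith
    · rw [hxpval]
      have : (k:ℝ) * step ≤ (n:ℝ) * step := by
        apply mul_le_mul_of_nonneg_right _ hstep0.le
        exact_mod_cast hkn
      linarith [hnstep]
  have hSU : |U ζ - U (xp k)| < dl := by
    have hd : dist ζ (xp k) < h := by
      rw [Real.dist_eq, hxpval]
      rw [abs_of_nonneg (by linarith)]
      linarith
    have := hmod ζ hζmem (xp k) hxpk_mem hd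
    rwa [Real.dist_eq] at this
  -- jumps are small
  have hjump : ∀ i : ℕ, i < n → |U (xp (i + 1)) - U (xp i)| ≤ dl := by
    intro i hi
    have hi1 : (i:ℝ) + 1 ≤ (n:ℝ) := by exact_mod_cast hi
    have hxi : xp i ∈ Set.Icc m M := by
      constructor
      · rw [hxpval]
        have := mul_nonneg (Nat.cast_nonneg i : (0:ℝ) ≤ i) hstep0.le
        linarith
      · rw [hxpval]
        have : (i:ℝ) * step ≤ (n:ℝ) * step :=
          mul_le_mul_of_nonneg_right (by linarith) hstep0.le
        linarith [hnstep]
    have hxi1 : xp (i + 1) ∈ Set.Icc m M := by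
      constructor
      · rw [hxpval]; push_cast
        have h0i : (0:ℝ) ≤ (i:ℝ) + 1 := by positivity
        have := mul_nonneg h0i hstep0.le
        linarith
      · rw [hxpval]; push_cast
        have : ((i:ℝ) + 1) * step ≤ (n:ℝ) * step :=
          mul_le_mul_of_nonneg_right (by linarith) hstep0.le
        linarith [hnstep]
    have hd : dist (xp (i + 1)) (xp i) < h := by
      rw [Real.dist_eq, hxpval, hxpval]
      push_cast
      rw [show m + ((i:ℝ) + 1) * step - (m + (i:ℝ) * step) = step by ring,
        abs_of_pos hstep0]
      exact hstep_h
    have := hmod (xp (i+1)) hxi1 (xp i) hxi hd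
    rw [Real.dist_eq] at this
    linarith
  -- telescoping
  have htel : U (xp k) - U (xp 0) = ∑ i : Fin n,
      (U (xp ((i:ℕ) + 1)) - U (xp (i:ℕ))) * (if (i:ℕ) + 1 ≤ k then (1:ℝ) else 0) := by
    have hc : ∀ i : Fin n, (U (xp ((i:ℕ) + 1)) - U (xp (i:ℕ))) * (if (i:ℕ) + 1 ≤ k then (1:ℝ) else 0)
        = (if (i:ℕ) < k then U (xp ((i:ℕ) + 1)) - U (xp (i:ℕ)) else 0) := by
      intro i
      by_cases hik : (i:ℕ) + 1 ≤ k
      · rw [if_pos hik, if_pos (by omega), mul_one]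
      · rw [if_neg hik, if_neg (by omega), mul_zero]
    rw [Finset.sum_congr rfl (fun i _ => hc i),
      Fin.sum_univ_eq_sum_range (fun j => if j < k then U (xp (j + 1)) - U (xp j) else 0) n,
      range_ite_sum n k hkn, Finset.sum_range_sub (fun j => U (xp j)) k]
  -- per-term bound
  have hterm : ∀ i : Fin n,
      |(if (i:ℕ) + 1 ≤ k then (1:ℝ) else 0) - 1 / (1 + Real.exp (-(A * (ζ - xp ((i:ℕ) + 1)))))|
        ≤ 1 / n + (if (i:ℕ) + 1 = k then (1:ℝ)/2 else 0) + (if (i:ℕ) + 1 = k + 1 then (1:ℝ)/2 else 0) := by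
    intro i
    set j : ℕ := (i:ℕ) + 1 with hj
    set t : ℝ := A * (ζ - xp j) with ht
    have hjn : j ≤ n := by omega
    have hxpj : xp j = m + (j:ℝ) * step := rfl
    have hnn : (0:ℝ) ≤ 1 / n := by positivity
    by_cases hjk : j ≤ k
    · -- χ = 1
      have hζj : (0:ℝ) ≤ ζ - xp j := by
        have : (j:ℝ) * step ≤ (k:ℝ) * step := by
          apply mul_le_mul_of_nonneg_right _ hstep0.le
          exact_mod_cast hjk
        rw [hxpj]; linarith
      have ht0 : 0 ≤ t := by rw [ht]; positivity
      rw [if_pos hjk, abs_of_nonneg (by linarith [sg_le_one t])]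
      by_cases hjk2 : j = k
      · rw [if_pos hjk2, if_neg (by omega)]
        have := one_sub_sg_le_half ht0
        linarith
      · -- j < k: far on the left
        have hjk3 : j + 1 ≤ k := by omega
        have hfar : step ≤ ζ - xp j := by
          have : ((j:ℝ) + 1) * step ≤ (k:ℝ) * step := by
            apply mul_le_mul_of_nonneg_right _ hstep0.le
            exact_mod_cast hjk3
          rw [hxpj]; linarith
        have htA : A * step ≤ t := by
          rw [ht]
          exact mul_le_mul_of_nonneg_left hfar hA0.le
        have hb : 1 - 1 / (1 + Real.exp (-t)) ≤ 1 / n := by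
          calc 1 - 1 / (1 + Real.exp (-t)) ≤ Real.exp (-t) := one_sub_sg_le_exp t
          _ ≤ Real.exp (-(A * step)) := Real.exp_le_exp.mpr (by linarith)
          _ ≤ 1 / n := hAexp
        have hi1 : (0:ℝ) ≤ (if (i:ℕ) + 1 = k then (1:ℝ)/2 else 0) := by positivity
        have hi2 : (0:ℝ) ≤ (if (i:ℕ) + 1 = k + 1 then (1:ℝ)/2 else 0) := by positivity
        linarith
    · -- χ = 0, j ≥ k+1
      have hζj : ζ - xp j < 0 := by
        have hjk1 : k + 1 ≤ j := by omega
        have : ((k:ℝ) + 1) * step ≤ (j:ℝ) * step := by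
          apply mul_le_mul_of_nonneg_right _ hstep0.le
          push_cast; exact_mod_cast hjk1
        rw [hxpj]; linarith
      have ht0 : t ≤ 0 := by
        rw [ht]
        exact mul_nonpos_of_nonneg_of_nonpos hA0.le hζj.le
      rw [if_neg hjk, abs_sub_comm, sub_zero, abs_of_nonneg (sg_pos t).le]
      by_cases hjk2 : j = k + 1
      · rw [if_pos hjk2, if_neg (by omega)]
        have := sg_le_half ht0
        linarith
      · -- j ≥ k+2 : far on the right
        have hjk3 : k + 2 ≤ j := by omega
        have hfar : xp j - ζ ≥ step := by
          have : ((k:ℝ) + 2) * step ≤ (j:ℝ) * step := by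
            apply mul_le_mul_of_nonneg_right _ hstep0.le
            push_cast; exact_mod_cast hjk3
          rw [hxpj]; linarith
        have htA : t ≤ -(A * step) := by
          rw [ht]
          linarith [mul_le_mul_of_nonneg_left hfar hA0.le]
        have hb : 1 / (1 + Real.exp (-t)) ≤ 1 / n := by
          calc 1 / (1 + Real.exp (-t)) ≤ Real.exp t := sg_le_exp t
          _ ≤ Real.exp (-(A * step)) := Real.exp_le_exp.mpr htA
          _ ≤ 1 / n := hAexp
        have hi1 : (0:ℝ) ≤ (if (i:ℕ) + 1 = k then (1:ℝ)/2 else 0) := by positivity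
        have hi2 : (0:ℝ) ≤ (if (i:ℕ) + 1 = k + 1 then (1:ℝ)/2 else 0) := by positivity
        linarith
  -- sum of the bounds
  have hbsum : ∑ i : Fin n,
      (1 / (n:ℝ) + (if (i:ℕ) + 1 = k then (1:ℝ)/2 else 0) + (if (i:ℕ) + 1 = k + 1 then (1:ℝ)/2 else 0)) ≤ 2 := by
    rw [Finset.sum_add_distrib, Finset.sum_add_distrib]
    have h1 : ∑ _i : Fin n, 1 / (n:ℝ) = 1 := by
      rw [Finset.sum_const, Finset.card_univ, Fintype.card_fin, nsmul_eq_mul]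
      field_simp
    have h2 : ∑ i : Fin n, (if (i:ℕ) + 1 = k then (1:ℝ)/2 else 0) ≤ 1/2 := by
      rw [Fin.sum_univ_eq_sum_range (fun j => if j + 1 = k then (1:ℝ)/2 else 0) n]
      exact ind_sum_le n k
    have h3 : ∑ i : Fin n, (if (i:ℕ) + 1 = k + 1 then (1:ℝ)/2 else 0) ≤ 1/2 := by
      rw [Fin.sum_univ_eq_sum_range (fun j => if j + 1 = k + 1 then (1:ℝ)/2 else 0) n]
      exact ind_sum_le n (k + 1)
    linarith
  -- assemble |U ζ - G| ≤ 3 dl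
  have hUG : |U ζ - G| ≤ 3 * dl := by
    have hsplit : U ζ - G = (U ζ - U (xp k)) + ∑ i : Fin n,
        (U (xp ((i:ℕ) + 1)) - U (xp (i:ℕ))) *
          ((if (i:ℕ) + 1 ≤ k then (1:ℝ) else 0) - 1 / (1 + Real.exp (-(A * (ζ - xp ((i:ℕ) + 1)))))) := by
      have hms : ∀ i : Fin n, (U (xp ((i:ℕ) + 1)) - U (xp (i:ℕ))) *
          ((if (i:ℕ) + 1 ≤ k then (1:ℝ) else 0) - 1 / (1 + Real.exp (-(A * (ζ - xp ((i:ℕ) + 1))))))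
          = (U (xp ((i:ℕ) + 1)) - U (xp (i:ℕ))) * (if (i:ℕ) + 1 ≤ k then (1:ℝ) else 0)
            - (U (xp ((i:ℕ) + 1)) - U (xp (i:ℕ))) * (1 / (1 + Real.exp (-(A * (ζ - xp ((i:ℕ) + 1)))))) := by
        intro i; ring
      rw [Finset.sum_congr rfl (fun i _ => hms i), Finset.sum_sub_distrib, ← htel, hG]
      ring
    rw [hsplit]
    calc |(U ζ - U (xp k)) + _| ≤ |U ζ - U (xp k)| + |∑ i : Fin n,
        (U (xp ((i:ℕ) + 1)) - U (xp (i:ℕ))) *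
          ((if (i:ℕ) + 1 ≤ k then (1:ℝ) else 0) - 1 / (1 + Real.exp (-(A * (ζ - xp ((i:ℕ) + 1))))))| :=
        abs_add_le _ _
    _ ≤ dl + ∑ i : Fin n, |(U (xp ((i:ℕ) + 1)) - U (xp (i:ℕ))) *
          ((if (i:ℕ) + 1 ≤ k then (1:ℝ) else 0) - 1 / (1 + Real.exp (-(A * (ζ - xp ((i:ℕ) + 1))))))| := by
        gcongr
        exact Finset.abs_sum_le_sum_abs _ _
    _ ≤ dl + ∑ i : Fin n, dl * (1 / n + (if (i:ℕ) + 1 = k then (1:ℝ)/2 else 0)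
          + (if (i:ℕ) + 1 = k + 1 then (1:ℝ)/2 else 0)) := by
        gcongr with i _
        rw [abs_mul]
        apply mul_le_mul (hjump (i:ℕ) i.isLt) (hterm i) (abs_nonneg _)
        exact hdl0.le
    _ = dl + dl * ∑ i : Fin n, (1 / (n:ℝ) + (if (i:ℕ) + 1 = k then (1:ℝ)/2 else 0)
          + (if (i:ℕ) + 1 = k + 1 then (1:ℝ)/2 else 0)) := by rw [Finset.mul_sum]
    _ ≤ dl + dl * 2 := by
        have := mul_le_mul_of_nonneg_left hbsum hdl0.le
        linarith
    _ = 3 * dl := by ring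
  -- conclude
  calc |φ (U ζ) - φ G| ≤ L * |U ζ - G| := hφlip (U ζ) G
  _ ≤ L * (3 * dl) := mul_le_mul_of_nonneg_left hUG hL0.le
  _ = 3 / 4 * ε := by rw [hdl]; field_simp
  _ < ε := by linarith
end
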